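/- (Serrin's comparison principle.) Let Ω ⊂ ℝⁿ be a bounded domain and let L be the second-order elliptic operator Lu = Σ_{i,j=1}^{n} a_{ij}(x) ∂²u/∂x_i∂x_j + Σ_{i=1}^{n} b_i(x) ∂u/∂x_i + c(x) u, where a_{ij} = a_{ji} are continuous on the closure of Ω, b_i, c ∈ L^∞(Ω), and L is uniformly elliptic: there is λ > 0 with Σ_{i,j} a_{ij}(x) ξ_i ξ_j ≥ λ|ξ|² for all x ∈ Ω and ξ ∈ ℝⁿ. If u ∈ C²(Ω) ∩ C(closure of Ω) satisfies Lu ≥ 0 in Ω and u ≤ 0 in Ω, then either u < 0 everywhere in Ω or u ≡ 0 in Ω. -/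

import Mathlib

/-!
The sets `{u < 0}` and `{u = 0}` are open in `Ω`, so by connectedness one of them is all of `Ω`.
Only the openness of `{u = 0}` needs work. If `u(x₁) < 0` close to a zero of `u`, the largest
ball around `x₁` on which `u < 0` touches the zero set at a point `x₀` inside `Ω`. There `u`
attains its maximum `0`, so `∇u(x₀) = 0`. Hopf's lemma says the opposite: the outward normal
derivative of `u` at `x₀` is positive. It is proved by comparing `u` on an annulus with the
barrier `w = exp(-α|x - y|²) - exp(-αr²)`, which satisfies `Lw > 0` once `α` is large, by means
of the weak maximum principle for strict subsolutions. That principle wants `c ≤ 0`; since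
`u ≤ 0`, replacing `c` by `min c 0` only increases `Lu`.
-/

open MeasureTheory Set

noncomputable def pd {m : ℕ} (u : EuclideanSpace ℝ (Fin m) → ℝ) (i : Fin m)
    (x : EuclideanSpace ℝ (Fin m)) : ℝ :=
  fderiv ℝ u x (EuclideanSpace.single i 1)

open Metric Filter Topology

local notation "E" n => EuclideanSpace ℝ (Fin n)

theorem IsLocalMax.deriv_deriv_nonpos {φ : ℝ → ℝ} {t : ℝ} (hmax : IsLocalMax φ t)
    (hc : ContinuousAt φ t) : deriv (deriv φ) t ≤ 0 := by
  by_contra! hpos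
  -- A positive second derivative makes `t` a local minimum as well, so `φ` is locally constant.
  have hmin : IsLocalMin φ t := isLocalMin_of_deriv_deriv_pos hpos hmax.deriv_eq_zero hc
  have hconst : φ =ᶠ[𝓝 t] fun _ => φ t := (hmin.and hmax).mono fun s hs => le_antisymm hs.2 hs.1
  have hderiv : deriv φ =ᶠ[𝓝 t] fun _ => 0 :=
    hconst.eventuallyEq_nhds.mono fun s hs => by rw [hs.deriv_eq, deriv_const]
  rw [hderiv.deriv_eq, deriv_const] at hpos
  exact hpos.false

theorem IsLocalMax.fderiv_fderiv_apply_self_nonpos {F : Type*} [NormedAddCommGroup F]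
    [NormedSpace ℝ F] {f : F → ℝ} {p : F} (hmax : IsLocalMax f p)
    (hf : ∀ᶠ x in 𝓝 p, DifferentiableAt ℝ f x) (hf' : DifferentiableAt ℝ (fderiv ℝ f) p)
    (ξ : F) : fderiv ℝ (fderiv ℝ f) p ξ ξ ≤ 0 := by
  set ℓ : ℝ → F := fun t => p + t • ξ
  have hℓ : ∀ t, HasDerivAt ℓ ξ t := fun t =>
    (((hasDerivAt_id t).smul_const ξ).const_add p).congr_deriv (one_smul ℝ ξ)
  have hℓ0 : ℓ 0 = p := by simp [ℓ]
  have hderiv : deriv (f ∘ ℓ) =ᶠ[𝓝 0] fun t => fderiv ℝ f (ℓ t) ξ := by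
    have hmem : ∀ᶠ t in 𝓝 (0 : ℝ), DifferentiableAt ℝ f (ℓ t) :=
      (hℓ 0).continuousAt.tendsto.eventually (hℓ0 ▸ hf)
    filter_upwards [hmem] with t ht using (ht.hasFDerivAt.comp_hasDerivAt t (hℓ t)).deriv
  have hsecond : HasDerivAt (fun t => fderiv ℝ f (ℓ t) ξ) (fderiv ℝ (fderiv ℝ f) p ξ ξ) 0 :=
    (ContinuousLinearMap.apply ℝ ℝ ξ).hasFDerivAt.comp_hasDerivAt 0
      (hf'.hasFDerivAt.comp_hasDerivAt_of_eq 0 (hℓ 0) hℓ0.symm)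
  have hcomp : IsLocalMax (f ∘ ℓ) 0 := (hℓ0 ▸ hmax).comp_continuous (hℓ 0).continuousAt
  have hcont : ContinuousAt (f ∘ ℓ) 0 :=
    (hℓ0 ▸ hf.self_of_nhds.continuousAt).comp (hℓ 0).continuousAt
  rw [← hsecond.deriv, ← hderiv.deriv_eq]
  exact hcomp.deriv_deriv_nonpos hcont

theorem hasFDerivAt_exp_neg_mul_norm_sub_sq {F : Type*} [NormedAddCommGroup F]
    [InnerProductSpace ℝ F] (y : F) (α : ℝ) (x : F) :
    HasFDerivAt (fun x => Real.exp (-α * ‖x - y‖ ^ 2))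
      ((-2 * α * Real.exp (-α * ‖x - y‖ ^ 2)) • innerSL ℝ (x - y)) x := by
  refine (((hasFDerivAt_id x).sub_const y).norm_sq.const_mul (-α)).exp.congr_fderiv ?_
  ext ξ
  simp only [id_eq, neg_mul, map_sub, ContinuousLinearMap.comp_id, neg_smul, smul_neg, neg_apply,
    smul_apply, sub_apply, coe_innerSL_apply, nsmul_eq_mul, Nat.cast_ofNat, smul_eq_mul, neg_inj]
  ring

theorem exists_pos_mul_add_lt_mul_sq {A : ℝ} (hA : 0 < A) (B C : ℝ) :
    ∃ α > 0, B * α + C < A * α ^ 2 := by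
  set α := max 1 ((|B| + |C| + 1) / A)
  have hα : 1 ≤ α := le_max_left _ _
  have hAα : |B| + |C| + 1 ≤ A * α := by
    have := le_max_right 1 ((|B| + |C| + 1) / A)
    rwa [div_le_iff₀ hA, mul_comm] at this
  refine ⟨α, by linarith, ?_⟩
  nlinarith [le_abs_self B, le_abs_self C, abs_nonneg C,
    mul_le_mul_of_nonneg_right hAα (by linarith : 0 ≤ α)]

theorem frontier_annulus_subset {X : Type*} [PseudoMetricSpace X] (y : X) (r s : ℝ) :
    frontier (ball y r \ closedBall y s) ⊆ sphere y r ∪ sphere y s := by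
  rw [sdiff_eq]
  refine (frontier_inter_subset _ _).trans ?_
  rw [frontier_compl]
  exact union_subset_union (inter_subset_left.trans frontier_ball_subset_sphere)
    (inter_subset_right.trans frontier_closedBall_subset_sphere)

theorem exists_ball_touching_zero {X : Type*} [MetricSpace X] [ProperSpace X] {u : X → ℝ}
    {z x₁ : X} {ρ : ℝ} (hu : ContinuousOn u (closedBall z ρ))
    (hle : ∀ x ∈ closedBall z ρ, u x ≤ 0) (hz : u z = 0) (hx₁ : dist x₁ z < ρ / 2)
    (hux₁ : u x₁ < 0) :
    ∃ r > 0, closedBall x₁ r ⊆ closedBall z ρ ∧ (∀ x ∈ ball x₁ r, u x < 0) ∧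
      ∃ x₀ ∈ sphere x₁ r, u x₀ = 0 := by
  set F := closedBall z ρ ∩ u ⁻¹' {0}
  have hF : IsClosed F := hu.preimage_isClosed_of_isClosed isClosed_closedBall isClosed_singleton
  have hzF : z ∈ F := ⟨mem_closedBall_self (by linarith [dist_nonneg (x := x₁) (y := z)]), hz⟩
  obtain ⟨x₀, hx₀F, hdist⟩ := hF.exists_infDist_eq_dist ⟨z, hzF⟩ x₁
  have hr : infDist x₁ F ≤ dist x₁ z := infDist_le_dist_of_mem hzF
  refine ⟨infDist x₁ F, (hF.notMem_iff_infDist_pos ⟨z, hzF⟩).1 fun h => hux₁.ne h.2,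
    closedBall_subset_closedBall' (by linarith), fun x hx => ?_, x₀, ?_, hx₀F.2⟩
  · rw [mem_ball] at hx
    have hxρ : x ∈ closedBall z ρ := mem_closedBall.2 (by linarith [dist_triangle x x₁ z])
    refine (hle x hxρ).lt_of_ne fun h => ?_
    have hxF : x ∈ F := ⟨hxρ, h⟩
    linarith [infDist_le_dist_of_mem (x := x₁) hxF, dist_comm x x₁]
  · rw [mem_sphere, dist_comm, ← hdist]

variable {n : ℕ}

theorem ContinuousLinearMap.apply_apply_eq_sum (B : (E n) →L[ℝ] (E n) →L[ℝ] ℝ) (ξ η : E n) :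
    B ξ η = ∑ i, ∑ j, ξ i * η j *
      B (EuclideanSpace.single i 1) (EuclideanSpace.single j 1) := by
  have hsum : ∀ w : E n, w = ∑ i, w i • EuclideanSpace.single i (1 : ℝ) := fun w => by
    simpa using ((EuclideanSpace.basisFun (Fin n) ℝ).sum_repr w).symm
  conv_lhs => rw [hsum ξ, hsum η]
  simp only [map_sum, map_smul, FunLike.coe_sum, FunLike.coe_smul,
    Finset.sum_apply, Pi.smul_apply, smul_eq_mul, Finset.mul_sum]
  rw [Finset.sum_comm]
  exact Finset.sum_congr rfl fun i _ => Finset.sum_congr rfl fun j _ => by ring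

theorem sum_mul_apply_single_nonpos {A : Fin n → Fin n → ℝ} (hAsymm : ∀ i j, A i j = A j i)
    (hA : ∀ ξ : E n, 0 ≤ ∑ i, ∑ j, A i j * ξ i * ξ j)
    {B : (E n) →L[ℝ] (E n) →L[ℝ] ℝ} (hB : ∀ ξ, B ξ ξ ≤ 0) :
    ∑ i, ∑ j, A i j * B (EuclideanSpace.single j 1) (EuclideanSpace.single i 1) ≤ 0 := by
  have hpsd : (Matrix.of A).PosSemidef := by
    refine .of_dotProduct_mulVec_nonneg (funext₂ fun i j => hAsymm j i) fun ξ => ?_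
    simpa [dotProduct, Matrix.mulVec, Finset.mul_sum, mul_comm, mul_left_comm]
      using hA (WithLp.toLp 2 ξ)
  obtain ⟨m, v, hv⟩ := Matrix.posSemidef_iff_eq_sum_vecMulVec.mp hpsd
  have hAv : ∀ i j, A i j = ∑ k, v k i * v k j := fun i j => by
    simpa [Matrix.sum_apply, Matrix.vecMulVec_apply] using congrFun₂ hv i j
  calc ∑ i, ∑ j, A i j * B (EuclideanSpace.single j 1) (EuclideanSpace.single i 1)
      = ∑ i, ∑ j, A i j * B (EuclideanSpace.single i 1) (EuclideanSpace.single j 1) := by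
        rw [Finset.sum_comm]
        exact Finset.sum_congr rfl fun i _ => Finset.sum_congr rfl fun j _ => by rw [hAsymm]
    _ = ∑ k, ∑ i, ∑ j, v k i * v k j *
          B (EuclideanSpace.single i 1) (EuclideanSpace.single j 1) := by
        simp only [hAv, Finset.sum_mul]
        rw [Finset.sum_congr rfl fun i _ => Finset.sum_comm, Finset.sum_comm]
    _ = ∑ k, B (WithLp.toLp 2 (v k)) (WithLp.toLp 2 (v k)) :=
        Finset.sum_congr rfl fun k _ =>
          (B.apply_apply_eq_sum (WithLp.toLp 2 (v k)) (WithLp.toLp 2 (v k))).symm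
    _ ≤ 0 := Finset.sum_nonpos fun k _ => hB _

theorem pd_pd_eq_fderiv_fderiv {f : (E n) → ℝ} {x : E n}
    (hf : DifferentiableAt ℝ (fderiv ℝ f) x) (i j : Fin n) :
    pd (pd f i) j x =
      fderiv ℝ (fderiv ℝ f) x (EuclideanSpace.single j 1) (EuclideanSpace.single i 1) := by
  unfold pd
  rw [fderiv_clm_apply hf (differentiableAt_const _)]
  simp

theorem pd_add_const_mul {u w : (E n) → ℝ} {x : E n} (hu : DifferentiableAt ℝ u x)
    (hw : DifferentiableAt ℝ w x) (ε : ℝ) (i : Fin n) :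
    pd (fun z => u z + ε * w z) i x = pd u i x + ε * pd w i x := by
  simp [pd, fderiv_fun_add hu (hw.const_mul ε), fderiv_const_mul hw ε]

theorem ContDiffOn.pd {U : Set (E n)} (hU : IsOpen U) {u : (E n) → ℝ} (hu : ContDiffOn ℝ 2 u U)
    (i : Fin n) : ContDiffOn ℝ 1 (pd u i) U :=
  (hu.fderiv_of_isOpen hU (by norm_num)).clm_apply contDiffOn_const

theorem IsLocalMax.sum_mul_pd_pd_nonpos {A : Fin n → Fin n → ℝ} (hAsymm : ∀ i j, A i j = A j i)
    (hA : ∀ ξ : E n, 0 ≤ ∑ i, ∑ j, A i j * ξ i * ξ j) {f : (E n) → ℝ} {p : E n}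
    (hmax : IsLocalMax f p) (hf : ∀ᶠ x in 𝓝 p, DifferentiableAt ℝ f x)
    (hf' : DifferentiableAt ℝ (fderiv ℝ f) p) :
    ∑ i, ∑ j, A i j * pd (pd f i) j p ≤ 0 := by
  simp only [pd_pd_eq_fderiv_fderiv hf']
  exact sum_mul_apply_single_nonpos hAsymm hA (hmax.fderiv_fderiv_apply_self_nonpos hf hf')

noncomputable def ellipticOp (a : (E n) → Fin n → Fin n → ℝ) (b : (E n) → Fin n → ℝ)
    (c : (E n) → ℝ) (u : (E n) → ℝ) (x : E n) : ℝ :=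
  (∑ i, ∑ j, a x i j * pd (pd u i) j x) + (∑ i, b x i * pd u i x) + c x * u x

section EllipticOp

variable (a : (E n) → Fin n → Fin n → ℝ) (b : (E n) → Fin n → ℝ) (c : (E n) → ℝ)

theorem ellipticOp_add_const_mul {U : Set (E n)} (hU : IsOpen U) {u w : (E n) → ℝ}
    (hu : ContDiffOn ℝ 2 u U) (hw : ContDiffOn ℝ 2 w U) (ε : ℝ) {x : E n} (hx : x ∈ U) :
    ellipticOp a b c (fun z => u z + ε * w z) x =
      ellipticOp a b c u x + ε * ellipticOp a b c w x := by
  have hdiff : ∀ {f : (E n) → ℝ} {k : WithTop ℕ∞}, ContDiffOn ℝ k f U → k ≠ 0 → ∀ z ∈ U,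
      DifferentiableAt ℝ f z := fun hf hk z hz =>
    (hf.contDiffAt (hU.mem_nhds hz)).differentiableAt hk
  have hfirst : ∀ i, pd (fun z => u z + ε * w z) i =ᶠ[𝓝 x] fun z => pd u i z + ε * pd w i z :=
    fun i => eventually_of_mem (hU.mem_nhds hx) fun z hz =>
      pd_add_const_mul (hdiff hu two_ne_zero z hz) (hdiff hw two_ne_zero z hz) ε i
  have hsecond : ∀ i j, pd (pd (fun z => u z + ε * w z) i) j x =
      pd (pd u i) j x + ε * pd (pd w i) j x := fun i j => by
    rw [show pd (pd (fun z => u z + ε * w z) i) j x = pd (fun z => pd u i z + ε * pd w i z) j x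
      from congrArg (fun L : (E n) →L[ℝ] ℝ => L (EuclideanSpace.single j 1))
        ((hfirst i).fderiv_eq (𝕜 := ℝ))]
    exact pd_add_const_mul (hdiff (hu.pd hU i) one_ne_zero x hx)
      (hdiff (hw.pd hU i) one_ne_zero x hx) ε j
  simp only [ellipticOp, hsecond,
    pd_add_const_mul (hdiff hu two_ne_zero x hx) (hdiff hw two_ne_zero x hx), mul_add,
    Finset.sum_add_distrib, Finset.mul_sum, mul_left_comm ε]
  ring

theorem ellipticOp_le_min_zero {u : (E n) → ℝ} {x : E n} (hu : u x ≤ 0) :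
    ellipticOp a b c u x ≤ ellipticOp a b (fun z => min (c z) 0) u x := by
  simp only [ellipticOp]
  linarith [mul_le_mul_of_nonpos_right (min_le_left (c x) 0) hu]

end EllipticOp

theorem nonpos_of_ellipticOp_pos {U : Set (E n)} (hUo : IsOpen U) (hUb : Bornology.IsBounded U)
    {a : (E n) → Fin n → Fin n → ℝ} {b : (E n) → Fin n → ℝ} {c : (E n) → ℝ}
    (hasym : ∀ x ∈ U, ∀ i j, a x i j = a x j i)
    (hell : ∀ x ∈ U, ∀ ξ : E n, 0 ≤ ∑ i, ∑ j, a x i j * ξ i * ξ j) (hc : ∀ x ∈ U, c x ≤ 0)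
    {v : (E n) → ℝ} (hv : ContDiffOn ℝ 2 v U) (hvc : ContinuousOn v (closure U))
    (hLv : ∀ x ∈ U, 0 < ellipticOp a b c v x) (hfr : ∀ x ∈ frontier U, v x ≤ 0)
    {x : E n} (hx : x ∈ closure U) : v x ≤ 0 := by
  obtain ⟨p, hpc, hmax⟩ := hUb.isCompact_closure.exists_isMaxOn ⟨x, hx⟩ hvc
  refine (hmax hx).trans (not_lt.1 fun hvp => ?_)
  have hpU : p ∈ U := by
    by_contra hpU
    exact (hfr p ⟨hpc, by rwa [hUo.interior_eq]⟩).not_gt hvp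
  have hlmax : IsLocalMax v p :=
    hmax.isLocalMax (mem_of_superset (hUo.mem_nhds hpU) subset_closure)
  have hgrad : ∀ i, pd v i p = 0 := fun i => by simp [pd, hlmax.fderiv_eq_zero]
  have hsecond := hlmax.sum_mul_pd_pd_nonpos (hasym p hpU) (hell p hpU)
    ((hUo.eventually_mem hpU).mono fun y hy =>
      (hv.contDiffAt (hUo.mem_nhds hy)).differentiableAt two_ne_zero)
    (((hv.contDiffAt (hUo.mem_nhds hpU)).fderiv_right (m := 1) (by norm_num)).differentiableAt
      one_ne_zero)
  have hLvp := hLv p hpU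
  simp only [ellipticOp, hgrad, mul_zero, Finset.sum_const_zero, add_zero] at hLvp
  nlinarith [hc p hpU]

noncomputable def hopfBarrier (y : E n) (α r : ℝ) (x : E n) : ℝ :=
  Real.exp (-α * ‖x - y‖ ^ 2) - Real.exp (-α * r ^ 2)

section HopfBarrier

variable (y : E n) (α r : ℝ)

theorem contDiff_hopfBarrier : ContDiff ℝ 2 (hopfBarrier y α r) :=
  ((contDiff_const.mul ((contDiff_id.sub contDiff_const).norm_sq ℝ)).exp).sub contDiff_const

theorem hasFDerivAt_hopfBarrier (x : E n) :
    HasFDerivAt (hopfBarrier y α r)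
      ((-2 * α * Real.exp (-α * ‖x - y‖ ^ 2)) • innerSL ℝ (x - y)) x :=
  (hasFDerivAt_exp_neg_mul_norm_sub_sq y α x).sub_const _

theorem hopfBarrier_le_one (hα : 0 ≤ α) (x : E n) : hopfBarrier y α r x ≤ 1 := by
  have h : Real.exp (-α * ‖x - y‖ ^ 2) ≤ 1 :=
    Real.exp_le_one_iff.2 (by nlinarith [norm_nonneg (x - y)])
  rw [hopfBarrier]
  linarith [Real.exp_pos (-α * r ^ 2)]

theorem hopfBarrier_eq_zero_of_mem_sphere {x : E n} (hx : x ∈ sphere y r) :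
    hopfBarrier y α r x = 0 := by
  rw [hopfBarrier, ← dist_eq_norm, mem_sphere.1 hx, sub_self]

theorem pd_hopfBarrier (x : E n) (i : Fin n) :
    pd (hopfBarrier y α r) i x = -2 * α * (x - y) i * Real.exp (-α * ‖x - y‖ ^ 2) := by
  rw [pd, (hasFDerivAt_hopfBarrier y α r x).fderiv]
  simp only [neg_mul, map_sub, neg_smul, neg_apply, smul_apply, sub_apply, coe_innerSL_apply,
    EuclideanSpace.inner_single_right, Real.ringHom_apply, one_mul, smul_eq_mul, PiLp.sub_apply,
    neg_inj]
  ring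

theorem pd_pd_hopfBarrier (x : E n) (i j : Fin n) :
    pd (pd (hopfBarrier y α r) i) j x = Real.exp (-α * ‖x - y‖ ^ 2) *
      (4 * α ^ 2 * (x - y) i * (x - y) j - if i = j then 2 * α else 0) := by
  have hcoord : HasFDerivAt (fun x : E n => -2 * α * (x - y) i)
      ((-2 * α) • (EuclideanSpace.proj i : (E n) →L[ℝ] ℝ)) x :=
    ((EuclideanSpace.proj i : (E n) →L[ℝ] ℝ).hasFDerivAt.sub_const (y i)).const_mul (-2 * α)
  have h := hcoord.fun_mul (hasFDerivAt_exp_neg_mul_norm_sub_sq y α x)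
  rw [pd, funext fun x => pd_hopfBarrier y α r x i, h.fderiv]
  simp only [neg_mul, PiLp.sub_apply, map_sub, neg_smul, smul_neg, neg_neg, add_apply, smul_apply,
    sub_apply, coe_innerSL_apply, EuclideanSpace.inner_single_right, Real.ringHom_apply, one_mul,
    smul_eq_mul, neg_apply, PiLp.proj_apply, PiLp.single_apply, mul_ite, mul_one, mul_zero]
  split_ifs <;> ring

theorem ellipticOp_hopfBarrier (a : (E n) → Fin n → Fin n → ℝ) (b : (E n) → Fin n → ℝ)
    (c : (E n) → ℝ) (x : E n) :
    ellipticOp a b c (hopfBarrier y α r) x =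
      Real.exp (-α * ‖x - y‖ ^ 2) * (4 * α ^ 2 * ∑ i, ∑ j, a x i j * (x - y) i * (x - y) j
        - 2 * α * ∑ i, a x i i - 2 * α * ∑ i, b x i * (x - y) i)
      + c x * hopfBarrier y α r x := by
  simp only [ellipticOp, pd_pd_hopfBarrier, pd_hopfBarrier, mul_sub, mul_ite, mul_zero,
    Finset.sum_sub_distrib, Finset.sum_ite_eq, Finset.mem_univ, if_true, Finset.mul_sum,
    neg_mul, mul_neg, Finset.sum_neg_distrib, ← sub_eq_add_neg]
  congr 2
  · congr 1
    · exact Finset.sum_congr rfl fun i _ => Finset.sum_congr rfl fun j _ => by ring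
    · exact Finset.sum_congr rfl fun i _ => by ring
  · exact Finset.sum_congr rfl fun i _ => by ring

theorem ellipticOp_hopfBarrier_pos {a : (E n) → Fin n → Fin n → ℝ} {b : (E n) → Fin n → ℝ}
    {c : (E n) → ℝ} {x : E n} {lam K M Mc : ℝ} (hlam : 0 ≤ lam)
    (hell : lam * ‖x - y‖ ^ 2 ≤ ∑ i, ∑ j, a x i j * (x - y) i * (x - y) j)
    (htrace : ∑ i, a x i i ≤ K) (hb : ∀ i, |b x i| ≤ M) (hc : -Mc ≤ c x) (hc0 : c x ≤ 0)
    (hlower : r / 2 ≤ ‖x - y‖) (hupper : ‖x - y‖ ≤ r) (hα : 0 ≤ α)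
    (hαlarge : (2 * K + 2 * n * M * r) * α + Mc < lam * r ^ 2 * α ^ 2) :
    0 < ellipticOp a b c (hopfBarrier y α r) x := by
  set e := Real.exp (-α * ‖x - y‖ ^ 2)
  have he : 0 < e := Real.exp_pos _
  have hquad : lam * r ^ 2 ≤ 4 * ∑ i, ∑ j, a x i j * (x - y) i * (x - y) j := by
    have hr : 0 ≤ r / 2 := by linarith [(norm_nonneg (x - y)).trans hupper]
    nlinarith [mul_le_mul_of_nonneg_left (pow_le_pow_left₀ hr hlower 2) hlam]
  have hdrift : ∑ i, b x i * (x - y) i ≤ n * M * r := by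
    have hterm : ∀ i ∈ Finset.univ, b x i * (x - y) i ≤ M * r := fun i _ => by
      have hcoord : |(x - y) i| ≤ r := (PiLp.norm_apply_le (x - y) i).trans hupper
      calc b x i * (x - y) i ≤ |b x i| * |(x - y) i| := (le_abs_self _).trans (abs_mul _ _).le
        _ ≤ M * r := mul_le_mul (hb i) hcoord (abs_nonneg _) ((abs_nonneg _).trans (hb i))
    simpa [mul_assoc] using Finset.sum_le_card_nsmul _ _ _ hterm
  have hzeroth : -Mc * e ≤ c x * hopfBarrier y α r x :=
    calc -Mc * e ≤ c x * e := mul_le_mul_of_nonneg_right hc he.le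
      _ ≤ c x * hopfBarrier y α r x :=
        mul_le_mul_of_nonpos_left (sub_le_self _ (Real.exp_pos _).le) hc0
  have hαe : 0 ≤ 2 * α * e := by positivity
  rw [ellipticOp_hopfBarrier]
  nlinarith [mul_pos he (by linarith : 0 < lam * r ^ 2 * α ^ 2 - (2 * K + 2 * n * M * r) * α - Mc),
    mul_le_mul_of_nonneg_left htrace hαe, mul_le_mul_of_nonneg_left hdrift hαe,
    mul_le_mul_of_nonneg_left hquad (by positivity : 0 ≤ α ^ 2 * e)]

end HopfBarrier

structure UniformlyEllipticOn (Ω : Set (E n)) (a : (E n) → Fin n → Fin n → ℝ)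
    (b : (E n) → Fin n → ℝ) (c : (E n) → ℝ) : Prop where
  symm : ∀ x i j, a x i j = a x j i
  continuousOn : ∀ i j, ContinuousOn (fun x => a x i j) Ω
  bounded_b : ∃ M : ℝ, ∀ x ∈ Ω, ∀ i, |b x i| ≤ M
  bounded_c : ∃ M : ℝ, ∀ x ∈ Ω, |c x| ≤ M
  uniform : ∃ lam > (0 : ℝ), ∀ x ∈ Ω, ∀ ξ : E n,
    lam * ‖ξ‖ ^ 2 ≤ ∑ i, ∑ j, a x i j * ξ i * ξ j

namespace UniformlyEllipticOn

variable {Ω : Set (E n)} {a : (E n) → Fin n → Fin n → ℝ} {b : (E n) → Fin n → ℝ}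
  {c : (E n) → ℝ} {u : (E n) → ℝ} {y : E n} {r : ℝ}

theorem exists_ellipticOp_hopfBarrier_pos (hL : UniformlyEllipticOn Ω a b c) (hr : 0 < r)
    (hball : closedBall y r ⊆ Ω) :
    ∃ α > 0, ∀ x ∈ ball y r \ closedBall y (r / 2),
      0 < ellipticOp a b (fun z => min (c z) 0) (hopfBarrier y α r) x := by
  obtain ⟨M, hM⟩ := hL.bounded_b
  obtain ⟨Mc, hMc⟩ := hL.bounded_c
  obtain ⟨lam, hlam, hell⟩ := hL.uniform
  obtain ⟨K, hK⟩ := (isCompact_closedBall y r).exists_bound_of_continuousOn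
    (continuousOn_finsetSum Finset.univ fun i _ => (hL.continuousOn i i).mono hball)
  obtain ⟨α, hα, hαlarge⟩ := exists_pos_mul_add_lt_mul_sq (by positivity : 0 < lam * r ^ 2)
    (2 * K + 2 * n * M * r) Mc
  refine ⟨α, hα, fun x hx => ?_⟩
  have hxball : x ∈ closedBall y r := ball_subset_closedBall hx.1
  have hxΩ : x ∈ Ω := hball hxball
  have hdist : r / 2 < ‖x - y‖ ∧ ‖x - y‖ < r := by
    simpa [dist_eq_norm] using And.intro hx.2 hx.1
  exact ellipticOp_hopfBarrier_pos y α r hlam.le (hell x hxΩ (x - y))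
    ((le_abs_self _).trans (by simpa using hK x hxball)) (hM x hxΩ)
    (le_min (abs_le.1 (hMc x hxΩ)).1 (by linarith [abs_nonneg (c x), hMc x hxΩ]))
    (min_le_right _ _) hdist.1.le hdist.2.le hα.le hαlarge

theorem exists_hopf_comparison (hL : UniformlyEllipticOn Ω a b c) (hΩ : IsOpen Ω)
    (hu : ContDiffOn ℝ 2 u Ω) (hLu : ∀ x ∈ Ω, 0 ≤ ellipticOp a b c u x) (hr : 0 < r)
    (hball : closedBall y r ⊆ Ω) (hneg : ∀ x ∈ ball y r, u x < 0) :
    ∃ α > 0, ∃ ε > 0, ∀ x ∈ ball y r \ closedBall y (r / 2),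
      u x + ε * hopfBarrier y α r x ≤ 0 := by
  obtain ⟨α, hα, hLw⟩ := hL.exists_ellipticOp_hopfBarrier_pos hr hball
  obtain ⟨ε, hε, hεu⟩ := (isCompact_sphere y (r / 2)).exists_forall_le'
    (hu.continuousOn.neg.mono ((sphere_subset_ball (by linarith)).trans
      (ball_subset_closedBall.trans hball))) (a := 0)
    fun x hx => neg_pos.2 (hneg x (sphere_subset_ball (by linarith) hx))
  refine ⟨α, hα, ε, hε, fun x hx => ?_⟩
  have hUΩ : ball y r \ closedBall y (r / 2) ⊆ Ω :=
    sdiff_subset.trans (ball_subset_closedBall.trans hball)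
  have hclosure : closure (ball y r \ closedBall y (r / 2)) ⊆ closedBall y r :=
    closure_minimal (sdiff_subset.trans ball_subset_closedBall) isClosed_closedBall
  have hw := (contDiff_hopfBarrier y α r).contDiffOn (s := Ω)
  have hv : ContDiffOn ℝ 2 (fun z => u z + ε * hopfBarrier y α r z) Ω :=
    hu.add (contDiffOn_const.mul hw)
  have hle : ∀ z ∈ closedBall y r, u z ≤ 0 := by
    rw [← closure_ball y hr.ne'] at hball ⊢
    exact fun z hz => le_on_closure (fun z hz => (hneg z hz).le) (hu.continuousOn.mono hball)
      continuousOn_const hz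
  obtain ⟨lam, hlam, hell⟩ := hL.uniform
  refine nonpos_of_ellipticOp_pos (isOpen_ball.sdiff isClosed_closedBall)
    (isBounded_ball.subset sdiff_subset) (b := b) (c := fun z => min (c z) 0)
    (fun z _ => hL.symm z)
    (fun z hz ξ => (by positivity : 0 ≤ lam * ‖ξ‖ ^ 2).trans (hell z (hUΩ hz) ξ))
    (fun z _ => min_le_right _ _) (hv.mono hUΩ) (hv.continuousOn.mono (hclosure.trans hball))
    (fun z hz => ?_) (fun z hz => ?_) (subset_closure hx)
  · rw [ellipticOp_add_const_mul a b _ hΩ hu hw ε (hUΩ hz)]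
    nlinarith [ellipticOp_le_min_zero a b c (hle z (ball_subset_closedBall hz.1)),
      hLu z (hUΩ hz), mul_pos hε (hLw z hz)]
  · rcases frontier_annulus_subset y r (r / 2) hz with hzr | hzr
    · rw [hopfBarrier_eq_zero_of_mem_sphere y α r hzr, mul_zero, add_zero]
      exact hle z (sphere_subset_closedBall hzr)
    · have huz : ε ≤ -u z := hεu z hzr
      nlinarith [mul_le_mul_of_nonneg_left (hopfBarrier_le_one y α r hα.le z) hε.le]

theorem hopf_lemma (hL : UniformlyEllipticOn Ω a b c) (hΩ : IsOpen Ω)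
    (hu : ContDiffOn ℝ 2 u Ω) (hLu : ∀ x ∈ Ω, 0 ≤ ellipticOp a b c u x) (hr : 0 < r)
    (hball : closedBall y r ⊆ Ω) (hneg : ∀ x ∈ ball y r, u x < 0) {x₀ : E n}
    (hx₀ : x₀ ∈ sphere y r) (hux₀ : u x₀ = 0) : 0 < fderiv ℝ u x₀ (x₀ - y) := by
  obtain ⟨α, hα, ε, hε, hcomp⟩ := hL.exists_hopf_comparison hΩ hu hLu hr hball hneg
  have hnorm : ‖x₀ - y‖ = r := by rw [← dist_eq_norm]; exact hx₀
  have hv : HasFDerivAt (fun z => u z + ε * hopfBarrier y α r z) (fderiv ℝ u x₀ +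
      ε • (-2 * α * Real.exp (-α * ‖x₀ - y‖ ^ 2)) • innerSL ℝ (x₀ - y)) x₀ :=
    ((hu.contDiffAt (hΩ.mem_nhds (hball (sphere_subset_closedBall hx₀)))).differentiableAt
      two_ne_zero).hasFDerivAt.add ((hasFDerivAt_hopfBarrier y α r x₀).const_mul ε)
  have hmax : IsLocalMaxOn (fun z => u z + ε * hopfBarrier y α r z)
      (ball y r \ closedBall y (r / 2)) x₀ :=
    eventually_nhdsWithin_of_forall fun z hz => by
      simpa [hux₀, hopfBarrier_eq_zero_of_mem_sphere y α r hx₀] using hcomp z hz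
  have hinward := mem_posTangentConeAt_of_frequently_mem
    (s := ball y r \ closedBall y (r / 2)) (x := x₀) (y := y - x₀) <| Eventually.frequently <| by
      filter_upwards [Ioo_mem_nhdsGT (by norm_num : (0 : ℝ) < 1 / 2)] with t ht
      have hsub : x₀ + t • (y - x₀) - y = (1 - t) • (x₀ - y) := by module
      simp only [Set.mem_sdiff, mem_ball, mem_closedBall, dist_eq_norm, hsub, norm_smul, hnorm,
        Real.norm_eq_abs, abs_of_pos (by linarith [ht.2] : 0 < 1 - t), not_le]
      constructor <;> nlinarith [ht.1, ht.2]
  have hinner : inner ℝ (x₀ - y) (y - x₀) = -r ^ 2 := by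
    rw [← neg_sub y x₀, inner_neg_left, real_inner_self_eq_norm_sq, norm_sub_rev, hnorm]
  have hderiv := hmax.hasFDerivWithinAt_nonpos hv.hasFDerivWithinAt hinward
  simp only [add_apply, smul_apply, innerSL_apply_apply, hinner, hnorm, smul_eq_mul] at hderiv
  rw [← neg_sub y x₀, map_neg]
  nlinarith [mul_pos hε (mul_pos (mul_pos hα (pow_pos hr 2)) (Real.exp_pos (-α * r ^ 2)))]

theorem isOpen_inter_preimage_zero (hL : UniformlyEllipticOn Ω a b c) (hΩ : IsOpen Ω)
    (hu : ContDiffOn ℝ 2 u Ω) (hLu : ∀ x ∈ Ω, 0 ≤ ellipticOp a b c u x)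
    (hneg : ∀ x ∈ Ω, u x ≤ 0) : IsOpen (Ω ∩ u ⁻¹' {0}) := by
  rw [Metric.isOpen_iff]
  rintro z ⟨hzΩ, hz⟩
  obtain ⟨ρ, hρ, hρΩ⟩ := Metric.isOpen_iff.1 hΩ z hzΩ
  have hcb : closedBall z (ρ / 2) ⊆ Ω := (closedBall_subset_ball (by linarith)).trans hρΩ
  refine ⟨ρ / 4, by positivity, fun x₁ hx₁ => ?_⟩
  rw [mem_ball] at hx₁
  have hx₁Ω : x₁ ∈ Ω := hcb (mem_closedBall.2 (by linarith))
  refine ⟨hx₁Ω, by_contra fun hne => ?_⟩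
  obtain ⟨r, hr, hsub, hlt, x₀, hx₀, hux₀⟩ := exists_ball_touching_zero
    (hu.continuousOn.mono hcb) (fun x hx => hneg x (hcb hx)) hz (by linarith)
    ((hneg x₁ hx₁Ω).lt_of_ne hne)
  have hx₀Ω : x₀ ∈ Ω := hcb (hsub (sphere_subset_closedBall hx₀))
  have hmax : IsLocalMax u x₀ := (hΩ.eventually_mem hx₀Ω).mono fun x hx => hux₀ ▸ hneg x hx
  have hhopf := hL.hopf_lemma hΩ hu hLu hr (hsub.trans hcb) hlt hx₀ hux₀
  rw [hmax.fderiv_eq_zero] at hhopf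
  exact hhopf.false

end UniformlyEllipticOn

theorem statement16_general (n : ℕ)
    (Ω : Set (EuclideanSpace ℝ (Fin n)))
    (hΩo : IsOpen Ω) (hΩc : IsConnected Ω)
    (a : EuclideanSpace ℝ (Fin n) → Fin n → Fin n → ℝ)
    (b : EuclideanSpace ℝ (Fin n) → Fin n → ℝ)
    (c : EuclideanSpace ℝ (Fin n) → ℝ)
    (hasym : ∀ x i j, a x i j = a x j i)
    (hacont : ∀ i j, ContinuousOn (fun x => a x i j) (closure Ω))
    (hbbd : ∃ M : ℝ, ∀ x ∈ Ω, ∀ i, |b x i| ≤ M)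
    (hcbd : ∃ M : ℝ, ∀ x ∈ Ω, |c x| ≤ M)
    (hell : ∃ lam > (0 : ℝ), ∀ x ∈ Ω, ∀ ξ : EuclideanSpace ℝ (Fin n),
        lam * ‖ξ‖ ^ 2 ≤ ∑ i, ∑ j, a x i j * ξ i * ξ j)
    (u : EuclideanSpace ℝ (Fin n) → ℝ)
    (hu2 : ContDiffOn ℝ 2 u Ω)
    (hLu : ∀ x ∈ Ω,
        0 ≤ (∑ i, ∑ j, a x i j * pd (pd u i) j x) + (∑ i, b x i * pd u i x) + c x * u x)
    (hneg : ∀ x ∈ Ω, u x ≤ 0) :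
    (∀ x ∈ Ω, u x < 0) ∨ (∀ x ∈ Ω, u x = 0) := by
  have hL : UniformlyEllipticOn Ω a b c :=
    ⟨hasym, fun i j => (hacont i j).mono subset_closure, hbbd, hcbd, hell⟩
  have hzero := hL.isOpen_inter_preimage_zero hΩo hu2 hLu hneg
  have hnegative : IsOpen (Ω ∩ u ⁻¹' Iio 0) :=
    hu2.continuousOn.isOpen_inter_preimage hΩo isOpen_Iio
  have hdisj : Disjoint (Ω ∩ u ⁻¹' Iio 0) (Ω ∩ u ⁻¹' {0}) :=
    disjoint_left.2 fun x hx hx' => (hx.2 : u x < 0).ne hx'.2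
  have hcover : Ω ⊆ (Ω ∩ u ⁻¹' Iio 0) ∪ (Ω ∩ u ⁻¹' {0}) := fun x hx =>
    (hneg x hx).lt_or_eq.imp (fun h => ⟨hx, h⟩) fun h => ⟨hx, h⟩
  rcases hΩc.isPreconnected.subset_or_subset hnegative hzero hdisj hcover with h | h
  · exact Or.inl fun x hx => (h hx).2
  · exact Or.inr fun x hx => (h hx).2

/-- **Serrin's comparison principle.** Let `Ω ⊂ ℝ^n` be a bounded domain and
`Lu = Σ a_{ij} ∂²u/∂x_i∂x_j + Σ b_i ∂u/∂x_i + c u` a uniformly elliptic operator with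
`a_{ij} = a_{ji}` continuous on `closure Ω` and `b_i, c ∈ L^∞(Ω)`.  If
`u ∈ C²(Ω) ∩ C(closure Ω)` satisfies `Lu ≥ 0` and `u ≤ 0` in `Ω`, then either `u < 0`
everywhere in `Ω` or `u ≡ 0` in `Ω`. -/
theorem statement16 (n : ℕ)
    (Ω : Set (EuclideanSpace ℝ (Fin n)))
    (hΩo : IsOpen Ω) (hΩc : IsConnected Ω) (hΩb : Bornology.IsBounded Ω)
    (a : EuclideanSpace ℝ (Fin n) → Fin n → Fin n → ℝ)
    (b : EuclideanSpace ℝ (Fin n) → Fin n → ℝ)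
    (c : EuclideanSpace ℝ (Fin n) → ℝ)
    (hasym : ∀ x i j, a x i j = a x j i)
    (hacont : ∀ i j, ContinuousOn (fun x => a x i j) (closure Ω))
    (hbbd : ∃ M : ℝ, ∀ x ∈ Ω, ∀ i, |b x i| ≤ M)
    (hcbd : ∃ M : ℝ, ∀ x ∈ Ω, |c x| ≤ M)
    (hell : ∃ lam > (0 : ℝ), ∀ x ∈ Ω, ∀ ξ : EuclideanSpace ℝ (Fin n),
        lam * ‖ξ‖ ^ 2 ≤ ∑ i, ∑ j, a x i j * ξ i * ξ j)
    (u : EuclideanSpace ℝ (Fin n) → ℝ)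
    (hu2 : ContDiffOn ℝ 2 u Ω) (huc : ContinuousOn u (closure Ω))
    (hLu : ∀ x ∈ Ω,
        0 ≤ (∑ i, ∑ j, a x i j * pd (pd u i) j x) + (∑ i, b x i * pd u i x) + c x * u x)
    (hneg : ∀ x ∈ Ω, u x ≤ 0) :
    (∀ x ∈ Ω, u x < 0) ∨ (∀ x ∈ Ω, u x = 0) :=
  statement16_general n Ω hΩo hΩc a b c hasym hacont hbbd hcbd hell u hu2 hLu hneg
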